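/- arXiv:2212.05257 — 5 statements merged into one kernel-verified Lean document; each statement's English description precedes it below -/
import Mathlib

section
/- There exists a constant C' ≥ 0, depending only on L_A, C, α and β, such that for a.e. t ∈ [0,T] and all x, v ∈ V: ⟨A(t,x), x − v⟩ ≤ −(L_A/2)‖x‖_V^β + C' a(t)(1 + ‖x‖_H²) + C'(1 + ‖x‖_H^{α(β−1)})‖v‖_V^β. -/
/-!
Split `⟨A x, x - v⟩ = ⟨A x, x⟩ - ⟨A x, v⟩`, bound the first term by (H.3) and the second by
Young's inequality with the conjugate exponents `β / (β - 1)` and `β`, dividing the weight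
`w = 1 + ‖x‖_H ^ α` into the `‖A x‖` factor. By (H.4) that factor then contributes only
`ε (a + C ‖x‖_V ^ β)`, and `ε = L_A / (2 C)` lets half of the coercivity absorb it. The price is
the factor `w ^ (β - 1) ≤ 2 ^ (β - 1) (1 + ‖x‖_H ^ (α (β - 1)))` in front of `‖v‖_V ^ β`.
-/

open MeasureTheory Filter Topology

namespace Real

theorem add_rpow_le_two_rpow_mul_rpow_add_rpow {p a b : ℝ} (ha : 0 ≤ a) (hb : 0 ≤ b)
    (hp : 0 ≤ p) : (a + b) ^ p ≤ 2 ^ p * (a ^ p + b ^ p) := by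
  wlog hab : a ≤ b generalizing a b
  · rw [add_comm a, add_comm (a ^ p)]
    exact this hb ha (le_of_not_ge hab)
  calc (a + b) ^ p ≤ (2 * b) ^ p := by gcongr; linarith
    _ = 2 ^ p * b ^ p := mul_rpow zero_le_two hb
    _ ≤ 2 ^ p * (a ^ p + b ^ p) := by gcongr; linarith [rpow_nonneg ha p]

noncomputable def youngConst (p q ε : ℝ) : ℝ := (p * ε) ^ (1 - q) / q

theorem youngConst_nonneg {p q ε : ℝ} (hpq : p.HolderConjugate q) (hε : 0 ≤ ε) :
    0 ≤ youngConst p q ε :=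
  div_nonneg (rpow_nonneg (mul_nonneg hpq.nonneg hε) _) hpq.symm.nonneg

theorem mul_le_mul_rpow_add_youngConst_mul_rpow {p q ε a b : ℝ} (hpq : p.HolderConjugate q)
    (hε : 0 < ε) (ha : 0 ≤ a) (hb : 0 ≤ b) :
    a * b ≤ ε * a ^ p + youngConst p q ε * b ^ q := by
  have hpε : 0 < p * ε := mul_pos hpq.pos hε
  set d := (p * ε) ^ p⁻¹ with hd
  have hd0 : 0 < d := rpow_pos_of_pos hpε _
  have hdp : d ^ p = p * ε := rpow_inv_rpow hpε.le hpq.ne_zero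
  have hdq : d ^ q = ((p * ε) ^ (1 - q))⁻¹ := by
    rw [hd, ← rpow_mul hpε.le, ← rpow_neg hpε.le, inv_mul_eq_div, hpq.symm.div_conj_eq_sub_one,
      neg_sub]
  calc a * b = (d * a) * (b / d) := by field_simp
    _ ≤ (d * a) ^ p / p + (b / d) ^ q / q :=
      young_inequality_of_nonneg (by positivity) (by positivity) hpq
    _ = ε * a ^ p + youngConst p q ε * b ^ q := by
      rw [mul_rpow hd0.le ha, div_rpow hb hd0.le, hdp, hdq, youngConst]
      field_simp [hpq.ne_zero, hpq.symm.ne_zero]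

theorem youngConst_div {p q ε w : ℝ} (hp : 0 ≤ p) (hε : 0 ≤ ε) (hw : 0 ≤ w) :
    youngConst p q (ε / w) = youngConst p q ε * w ^ (q - 1) := by
  rw [youngConst, youngConst, ← mul_div_assoc, div_rpow (mul_nonneg hp hε) hw,
    show 1 - q = -(q - 1) by ring, rpow_neg hw, div_inv_eq_mul]
  ring

end Real

open Real

noncomputable def perturbedCoercivityConst (L C β : ℝ) : ℝ :=
  1 + L / (2 * C) + youngConst (β / (β - 1)) β (L / (2 * C)) * 2 ^ (β - 1)

theorem perturbedCoercivityConst_nonneg {L C β : ℝ} (hL : 0 < L) (hC : 0 < C) (hβ : 1 < β) :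
    0 ≤ perturbedCoercivityConst L C β := by
  have := youngConst_nonneg (HolderConjugate.conjExponent hβ).symm (by positivity : 0 ≤ L / (2 * C))
  unfold perturbedCoercivityConst
  positivity

theorem apply_sub_le_of_coercive_of_growth {V : Type*} [NormedAddCommGroup V] [NormedSpace ℝ V]
    (f : StrongDual ℝ V) (x v : V) {a h L C α β : ℝ} (hβ : 1 < β) (hL : 0 < L) (hC : 0 < C)
    (ha : 0 ≤ a) (hh : 0 ≤ h)
    (hcoercive : f x ≤ a * (1 + h ^ 2) - L * ‖x‖ ^ β)
    (hgrowth : ‖f‖ ^ (β / (β - 1)) ≤ (a + C * ‖x‖ ^ β) * (1 + h ^ α)) :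
    f (x - v) ≤ -(L / 2) * ‖x‖ ^ β + perturbedCoercivityConst L C β * a * (1 + h ^ 2)
      + perturbedCoercivityConst L C β * (1 + h ^ (α * (β - 1))) * ‖v‖ ^ β := by
  have hγβ : (β / (β - 1)).HolderConjugate β := (HolderConjugate.conjExponent hβ).symm
  set ε := L / (2 * C) with hε
  set K := youngConst (β / (β - 1)) β ε
  set w := 1 + h ^ α
  have hε0 : 0 < ε := by positivity
  have hK : 0 ≤ K := youngConst_nonneg hγβ hε0.le
  have hw : 0 < w := by positivity
  have hfv : -f v ≤ ‖f‖ * ‖v‖ := (neg_le_abs _).trans (f.le_opNorm v)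
  have hyoung : ‖f‖ * ‖v‖ ≤ ε * ‖f‖ ^ (β / (β - 1)) / w + K * w ^ (β - 1) * ‖v‖ ^ β := by
    have := mul_le_mul_rpow_add_youngConst_mul_rpow hγβ (div_pos hε0 hw) (norm_nonneg f)
      (norm_nonneg v)
    rwa [youngConst_div hγβ.nonneg hε0.le hw.le, div_mul_eq_mul_div] at this
  have habsorb : ε * ‖f‖ ^ (β / (β - 1)) / w ≤ ε * a + L / 2 * ‖x‖ ^ β := by
    rw [div_le_iff₀ hw]
    calc ε * ‖f‖ ^ (β / (β - 1)) ≤ ε * ((a + C * ‖x‖ ^ β) * w) := by gcongr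
      _ = (ε * a + L / 2 * ‖x‖ ^ β) * w := by rw [hε]; field_simp
  have hweight : w ^ (β - 1) ≤ 2 ^ (β - 1) * (1 + h ^ (α * (β - 1))) := by
    have := add_rpow_le_two_rpow_mul_rpow_add_rpow zero_le_one (rpow_nonneg hh α)
      (sub_pos.2 hβ).le
    rwa [one_rpow, ← rpow_mul hh] at this
  have hvβ : 0 ≤ ‖v‖ ^ β := rpow_nonneg (norm_nonneg v) β
  have hhαβ : 0 ≤ h ^ (α * (β - 1)) := rpow_nonneg hh _
  have hK2 : 0 ≤ K * 2 ^ (β - 1) := by positivity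
  calc f (x - v) = f x + -f v := by rw [map_sub, sub_eq_add_neg]
    _ ≤ a * (1 + h ^ 2) - L * ‖x‖ ^ β
          + (ε * a + L / 2 * ‖x‖ ^ β + K * w ^ (β - 1) * ‖v‖ ^ β) := by
      linarith
    _ ≤ _ := by
      unfold perturbedCoercivityConst
      nlinarith [mul_le_mul_of_nonneg_left hweight hK, mul_nonneg hK2 (mul_nonneg ha (sq_nonneg h)),
        mul_nonneg hε0.le (mul_nonneg ha (sq_nonneg h)), mul_nonneg (add_nonneg zero_le_one hε0.le)
          (mul_nonneg (add_nonneg zero_le_one hhαβ) hvβ)]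

theorem statement1_general {V H : Type*}
    [NormedAddCommGroup V] [NormedSpace ℝ V]
    [NormedAddCommGroup H] [InnerProductSpace ℝ H]
    -- the continuous dense embedding `V ⊂ H` of the Gelfand triple
    (i : V →L[ℝ] H)
    (T : ℝ) (β : ℝ) (hβ : 1 < β)
    (a : ℝ → ℝ) (ha_nonneg : ∀ t, 0 ≤ a t)
    (A : ℝ → V → StrongDual ℝ V)
    (L_A : ℝ) (hLA : 0 < L_A) (α C : ℝ) (hC : 0 < C)
    -- (H.3) coercivity
    (hH3 : ∀ᵐ t ∂(volume.restrict (Set.Icc (0:ℝ) T)), ∀ x : V,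
      (A t x) x ≤ a t * (1 + ‖i x‖ ^ 2) - L_A * ‖x‖ ^ β)
    -- (H.4) growth
    (hH4 : ∀ᵐ t ∂(volume.restrict (Set.Icc (0:ℝ) T)), ∀ x : V,
      ‖A t x‖ ^ (β / (β - 1)) ≤ (a t + C * ‖x‖ ^ β) * (1 + ‖i x‖ ^ α)) :
    ∃ C' : ℝ, 0 ≤ C' ∧
      ∀ᵐ t ∂(volume.restrict (Set.Icc (0:ℝ) T)), ∀ x v : V,
        (A t x) (x - v) ≤ -(L_A / 2) * ‖x‖ ^ β + C' * a t * (1 + ‖i x‖ ^ 2)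
          + C' * (1 + ‖i x‖ ^ (α * (β - 1))) * ‖v‖ ^ β := by
  refine ⟨perturbedCoercivityConst L_A C β, perturbedCoercivityConst_nonneg hLA hC hβ, ?_⟩
  filter_upwards [hH3, hH4] with t hcoercive hgrowth x v
  exact apply_sub_le_of_coercive_of_growth (A t x) x v hβ hLA hC (ha_nonneg t) (norm_nonneg _)
    (hcoercive x) (hgrowth x)

/-- Under the coercivity (H.3) and growth (H.4) hypotheses, there is a constant
`C' ≥ 0` such that for a.e. `t ∈ [0,T]` and all `x, v ∈ V`:
`⟨A(t,x), x − v⟩ ≤ −(L_A/2)‖x‖_V^β + C' a(t)(1 + ‖x‖_H²) + C'(1 + ‖x‖_H^{α(β−1)})‖v‖_V^β`. -/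
theorem statement1 {V H : Type*}
    [NormedAddCommGroup V] [NormedSpace ℝ V]
    [NormedAddCommGroup H] [InnerProductSpace ℝ H]
    -- the continuous dense embedding `V ⊂ H` of the Gelfand triple
    (i : V →L[ℝ] H) (hi_inj : Function.Injective i) (hi_dense : DenseRange i)
    (T : ℝ) (hT : 0 < T) (β : ℝ) (hβ : 1 < β)
    (a : ℝ → ℝ) (ha_nonneg : ∀ t, 0 ≤ a t) (ha_int : IntegrableOn a (Set.Icc 0 T))
    (A : ℝ → V → StrongDual ℝ V)
    (L_A : ℝ) (hLA : 0 < L_A) (α C : ℝ) (hα : 0 ≤ α) (hC : 0 < C)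
    -- (H.3) coercivity
    (hH3 : ∀ᵐ t ∂(volume.restrict (Set.Icc (0:ℝ) T)), ∀ x : V,
      (A t x) x ≤ a t * (1 + ‖i x‖ ^ 2) - L_A * ‖x‖ ^ β)
    -- (H.4) growth
    (hH4 : ∀ᵐ t ∂(volume.restrict (Set.Icc (0:ℝ) T)), ∀ x : V,
      ‖A t x‖ ^ (β / (β - 1)) ≤ (a t + C * ‖x‖ ^ β) * (1 + ‖i x‖ ^ α)) :
    ∃ C' : ℝ, 0 ≤ C' ∧
      ∀ᵐ t ∂(volume.restrict (Set.Icc (0:ℝ) T)), ∀ x v : V,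
        (A t x) (x - v) ≤ -(L_A / 2) * ‖x‖ ^ β + C' * a t * (1 + ‖i x‖ ^ 2)
          + C' * (1 + ‖i x‖ ^ (α * (β - 1))) * ‖v‖ ^ β :=
  statement1_general i T β hβ a ha_nonneg A L_A hLA α C hC hH3 hH4
end

section
/- Let Υ > 0, p > 0 and p' ∈ (0,p]. For every h ∈ 𝓗_p with ∫_{Z_T} h^{p'} dν_T < ∞, one has sup_{g ∈ S^Υ} ∫_{Z_T} h(ζ)^{p'} (g(ζ) + 1) ν_T(dζ) < ∞. -/
open MeasureTheory Filter Topology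
open scoped ENNReal

/-- The set `S^Υ` of nonnegative measurable functions `g` on `(Z_T, ν_T)` with
`∫ ℓ(g) dν_T ≤ Υ`, where `ℓ(r) = r log r − r + 1`. -/
def entS {X : Type*} [MeasurableSpace X] (μ : Measure X) (Υ : ℝ) : Set (X → ℝ) :=
  {g | Measurable g ∧ (∀ x, 0 ≤ g x) ∧
    ∫⁻ x, ENNReal.ofReal (g x * Real.log (g x) - g x + 1) ∂μ ≤ ENNReal.ofReal Υ}

/-- The class `𝓗_p`: nonnegative measurable `h` on `(Z_T, ν_T)` such that for some `δ > 0`,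
`∫_E exp(δ h^p) dν_T < ∞` for every measurable `E` with `ν_T(E) < ∞`. -/
def memHp {X : Type*} [MeasurableSpace X] (μ : Measure X) (p : ℝ) (h : X → ℝ) : Prop :=
  Measurable h ∧ (∀ x, 0 ≤ h x) ∧
    ∃ δ > (0:ℝ), ∀ E : Set X, MeasurableSet E → μ E < ∞ →
      ∫⁻ x in E, ENNReal.ofReal (Real.exp (δ * h x ^ p)) ∂μ < ∞

/-! The entropy bound controls `g` through the Young inequality `s t ≤ (e^s - 1) + ℓ(t)`.
On `{h ≥ 1}`, a set of finite measure by Chebyshev, take `s = δ h^{p'} ≤ δ h^p`: then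
`h^{p'} g ≤ δ⁻¹ (e^{δ h^p} + ℓ(g))`, which is integrable there by the `𝓗_p` condition.
On `{h < 1}`, take `s = 1`: then `h^{p'} g ≤ h^{p'} (ℓ(g) + e - 1) ≤ ℓ(g) + (e - 1) h^{p'}`.
Both bounds integrate to constants that do not depend on `g ∈ S^Υ`. -/

section

open Real

/-- `Real.log 0 = 0` gives `ell 0 = 1`, matching `ℓ(0) = 1`. -/
noncomputable def ell (r : ℝ) : ℝ := r * log r - r + 1

@[fun_prop]
lemma measurable_ell : Measurable ell := by
  unfold ell; fun_prop

/-- `ℓ` is the Legendre transform of `s ↦ e^s - 1`. -/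
lemma mul_le_exp_sub_one_add_ell (s : ℝ) {t : ℝ} (ht : 0 ≤ t) :
    s * t ≤ exp s - 1 + ell t := by
  rcases ht.eq_or_lt with rfl | ht
  · simp [ell, (exp_pos s).le]
  · have htangent : t * (s - log t + 1) ≤ exp s := by
      calc t * (s - log t + 1) ≤ t * exp (s - log t) :=
            mul_le_mul_of_nonneg_left (add_one_le_exp _) ht.le
        _ = exp s := by rw [exp_sub, exp_log ht]; field_simp
    unfold ell; linarith

lemma ell_nonneg {t : ℝ} (ht : 0 ≤ t) : 0 ≤ ell t := by
  simpa using mul_le_exp_sub_one_add_ell 0 ht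

lemma rpow_mul_le_of_one_le {δ p p' y t : ℝ} (hδ : 0 < δ) (hp' : p' ≤ p) (hy : 1 ≤ y)
    (ht : 0 ≤ t) : y ^ p' * t ≤ δ⁻¹ * (exp (δ * y ^ p) + ell t) := by
  have hyoung := mul_le_exp_sub_one_add_ell (δ * y ^ p') ht
  have hexp : exp (δ * y ^ p') ≤ exp (δ * y ^ p) :=
    exp_le_exp.2 <| mul_le_mul_of_nonneg_left (rpow_le_rpow_of_exponent_le hy hp') hδ.le
  rw [le_inv_mul_iff₀ hδ]
  linarith

lemma rpow_mul_le_of_lt_one {p' y t : ℝ} (hp' : 0 ≤ p') (hy₀ : 0 ≤ y) (hy : y < 1)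
    (ht : 0 ≤ t) : y ^ p' * t ≤ ell t + (exp 1 - 1) * y ^ p' := by
  have hyp'₀ : 0 ≤ y ^ p' := rpow_nonneg hy₀ p'
  have hyp' : y ^ p' ≤ 1 := rpow_le_one hy₀ hy.le hp'
  have hyoung := mul_le_exp_sub_one_add_ell 1 ht
  have hell := ell_nonneg ht
  nlinarith

lemma ofReal_rpow_mul_add_one_le {δ p p' y t : ℝ} (hδ : 0 < δ) (hp'₀ : 0 ≤ p')
    (hp' : p' ≤ p) (hy : 0 ≤ y) (ht : 0 ≤ t) :
    ENNReal.ofReal (y ^ p' * (t + 1)) ≤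
      ENNReal.ofReal δ⁻¹ * (Set.Ici 1).indicator (fun u ↦ ENNReal.ofReal (exp (δ * u ^ p))) y
        + ENNReal.ofReal (δ⁻¹ + 1) * ENNReal.ofReal (ell t)
        + ENNReal.ofReal (exp 1) * ENNReal.ofReal (y ^ p') := by
  have hyp'₀ : 0 ≤ y ^ p' := rpow_nonneg hy p'
  have hell := ell_nonneg ht
  have hδ' : 0 ≤ δ⁻¹ := inv_nonneg.2 hδ.le
  by_cases hy1 : 1 ≤ y
  · have := rpow_mul_le_of_one_le hδ hp' hy1 ht
    rw [Set.indicator_of_mem (Set.mem_Ici.2 hy1), ← ENNReal.ofReal_mul hδ',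
      ← ENNReal.ofReal_mul (by positivity), ← ENNReal.ofReal_mul (by positivity),
      ← ENNReal.ofReal_add (by positivity) (by positivity),
      ← ENNReal.ofReal_add (by positivity) (by positivity)]
    refine ENNReal.ofReal_le_ofReal ?_
    nlinarith [exp_pos (δ * y ^ p), add_one_le_exp (1 : ℝ)]
  · have := rpow_mul_le_of_lt_one hp'₀ hy (not_le.1 hy1) ht
    rw [Set.indicator_of_notMem (by simpa using hy1), mul_zero, zero_add,
      ← ENNReal.ofReal_mul (by positivity), ← ENNReal.ofReal_mul (by positivity),
      ← ENNReal.ofReal_add (by positivity) (by positivity)]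
    refine ENNReal.ofReal_le_ofReal ?_
    nlinarith

end

theorem statement4_general {X : Type*} [MeasurableSpace X] (νT : Measure X)
    (Υ p p' : ℝ) (hp'₀ : 0 < p') (hp'p : p' ≤ p)
    (h : X → ℝ) (hHp : memHp νT p h)
    (hLp' : ∫⁻ x, ENNReal.ofReal (h x ^ p') ∂νT < ∞) :
    (⨆ g ∈ entS νT Υ, ∫⁻ x, ENNReal.ofReal (h x ^ p' * (g x + 1)) ∂νT) < ∞ := by
  obtain ⟨hh_meas, hh_nonneg, δ, hδ, hexp⟩ := hHp
  set A := h ⁻¹' Set.Ici 1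
  have hA : MeasurableSet A := hh_meas measurableSet_Ici
  have hνA : νT A < ∞ := by
    refine (meas_le_lintegral₀ (by fun_prop) fun x hx ↦ ?_).trans_lt hLp'
    exact ENNReal.one_le_ofReal.2 (Real.one_le_rpow hx hp'₀.le)
  set E := fun x ↦ ENNReal.ofReal (Real.exp (δ * h x ^ p))
  refine lt_of_le_of_lt (iSup₂_le fun g hg ↦ ?_) (?_ : ENNReal.ofReal δ⁻¹ * ∫⁻ x in A, E x ∂νT
    + ENNReal.ofReal (δ⁻¹ + 1) * ENNReal.ofReal Υ
    + ENNReal.ofReal (Real.exp 1) * ∫⁻ x, ENNReal.ofReal (h x ^ p') ∂νT < ∞)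
  · obtain ⟨hg_meas, hg_nonneg, hg_ent⟩ := hg
    calc ∫⁻ x, ENNReal.ofReal (h x ^ p' * (g x + 1)) ∂νT
        ≤ ∫⁻ x, ENNReal.ofReal δ⁻¹ * A.indicator E x
            + ENNReal.ofReal (δ⁻¹ + 1) * ENNReal.ofReal (ell (g x))
            + ENNReal.ofReal (Real.exp 1) * ENNReal.ofReal (h x ^ p') ∂νT :=
          lintegral_mono fun x ↦
            ofReal_rpow_mul_add_one_le hδ hp'₀.le hp'p (hh_nonneg x) (hg_nonneg x)
      _ ≤ _ := by
          rw [lintegral_add_right _ (by fun_prop), lintegral_add_right _ (by fun_prop),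
            lintegral_const_mul' _ _ ENNReal.ofReal_ne_top,
            lintegral_const_mul' _ _ ENNReal.ofReal_ne_top,
            lintegral_const_mul' _ _ ENNReal.ofReal_ne_top, lintegral_indicator hA]
          gcongr
          exact hg_ent
  · have hEA : ∫⁻ x in A, E x ∂νT < ∞ := hexp A hA hνA
    finiteness

/-- for `h ∈ 𝓗_p ∩ L^{p'}(ν_T)` with `0 < p' ≤ p`,
`sup_{g ∈ S^Υ} ∫ h^{p'} (g + 1) dν_T < ∞`. -/
theorem statement4 {X : Type*} [MeasurableSpace X] (νT : Measure X) [SigmaFinite νT]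
    (Υ p p' : ℝ) (hΥ : 0 < Υ) (hp : 0 < p) (hp'₀ : 0 < p') (hp'p : p' ≤ p)
    (h : X → ℝ) (hHp : memHp νT p h)
    (hLp' : ∫⁻ x, ENNReal.ofReal (h x ^ p') ∂νT < ∞) :
    (⨆ g ∈ entS νT Υ, ∫⁻ x, ENNReal.ofReal (h x ^ p' * (g x + 1)) ∂νT) < ∞ :=
  statement4_general νT Υ p p' hp'₀ hp'p h hHp hLp'
end

section
/- Let Υ > 0. For every h ∈ 𝓗_2 with ∫_{Z_T} h² dν_T < ∞, one has sup_{g ∈ S^Υ} ∫_{Z_T} h(ζ) |g(ζ) − 1| ν_T(dζ) < ∞. -/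
open MeasureTheory Filter Topology
open scoped ENNReal

/-!
Young's inequality `t r ≤ r log r - r + eᵗ`, the Legendre duality between `ℓ` and `eᵗ - 1`,
applied at `±t` gives `t |r - 1| ≤ ℓ(r) + (eᵗ - 1 - t)` for `t, r ≥ 0`. Hence for `g ∈ S^Υ`,
`∫ h |g - 1| ≤ Υ + ∫ (eʰ - 1 - h)`, and the last integral is finite: with `M ≥ max 1 δ⁻¹`,
the integrand is at most `e^M h²` on `{h ≤ M}`, while `{h > M}` has finite measure since
`h ∈ L²`, and there the integrand is at most `eʰ ≤ exp (δ h²)`.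
-/

open Real InformationTheory

lemma klFun_eq_mul_log_sub_add_one (r : ℝ) : klFun r = r * log r - r + 1 := by
  rw [klFun_apply]; ring

lemma mul_le_mul_log_sub_add_exp (t : ℝ) {r : ℝ} (hr : 0 ≤ r) :
    t * r ≤ r * log r - r + exp t := by
  rcases hr.eq_or_lt with rfl | hr
  · simp [(exp_pos t).le]
  · have key := mul_le_mul_of_nonneg_left (add_one_le_exp (t - log r)) hr.le
    rw [exp_sub, exp_log hr, mul_div_cancel₀ _ hr.ne'] at key
    linarith

lemma mul_abs_sub_one_le_klFun_add {t r : ℝ} (ht : 0 ≤ t) (hr : 0 ≤ r) :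
    t * |r - 1| ≤ klFun r + (exp t - 1 - t) := by
  have above := mul_le_mul_log_sub_add_exp t hr
  have below := mul_le_mul_log_sub_add_exp (-t) hr
  have hsinh : t ≤ sinh t := self_le_sinh_iff.2 ht
  rw [sinh_eq] at hsinh
  rw [klFun_eq_mul_log_sub_add_one]
  rcases le_total r 1 with hr1 | hr1
  · rw [abs_of_nonpos (by linarith)]; linarith
  · rw [abs_of_nonneg (by linarith)]; linarith

lemma exp_sub_one_sub_le_exp_mul_sq {t M : ℝ} (hM : 1 ≤ M) (ht : 0 ≤ t) (htM : t ≤ M) :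
    exp t - 1 - t ≤ exp M * t ^ 2 := by
  rcases le_total t 1 with ht1 | ht1
  · calc exp t - 1 - t ≤ t ^ 2 :=
          (abs_le.1 (abs_exp_sub_one_sub_id_le (by rwa [abs_of_nonneg ht]))).2
      _ ≤ exp M * t ^ 2 := le_mul_of_one_le_left (sq_nonneg t) (one_le_exp (by linarith))
  · calc exp t - 1 - t ≤ exp M := by linarith [exp_le_exp.2 htM]
      _ ≤ exp M * t ^ 2 := le_mul_of_one_le_right (exp_pos M).le (one_le_pow₀ ht1)

lemma exp_sub_one_sub_le_exp_of_one_le_mul {t δ : ℝ} (ht : 0 ≤ t) (hδt : 1 ≤ δ * t) :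
    exp t - 1 - t ≤ exp (δ * t ^ 2) := by
  have : t ≤ δ * t ^ 2 := by nlinarith
  linarith [exp_le_exp.2 this]

section Integrals

variable {X : Type*} [MeasurableSpace X] {μ : Measure X} {h : X → ℝ}

lemma measure_setOf_lt_lt_top_of_lintegral_sq (hh : Measurable h)
    (hL2 : ∫⁻ x, ENNReal.ofReal (h x ^ 2) ∂μ < ∞) {c : ℝ} (hc : 0 < c) :
    μ {x | c < h x} < ∞ := by
  have hsub : {x | c < h x} ⊆ {x | ENNReal.ofReal (c ^ 2) ≤ ENNReal.ofReal (h x ^ 2)} :=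
    fun x hx => ENNReal.ofReal_le_ofReal (pow_le_pow_left₀ hc.le (le_of_lt hx) 2)
  have hc2 : ENNReal.ofReal (c ^ 2) ≠ 0 := by
    simp only [ne_eq, ENNReal.ofReal_eq_zero, not_le]; positivity
  calc μ {x | c < h x} ≤ (∫⁻ x, ENNReal.ofReal (h x ^ 2) ∂μ) / ENNReal.ofReal (c ^ 2) :=
        (measure_mono hsub).trans (meas_ge_le_lintegral_div
          (hh.pow_const 2).ennreal_ofReal.aemeasurable hc2 ENNReal.ofReal_ne_top)
    _ < ∞ := ENNReal.div_lt_top hL2.ne hc2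

lemma lintegral_exp_sub_one_sub_lt_top (hH2 : memHp μ 2 h)
    (hL2 : ∫⁻ x, ENNReal.ofReal (h x ^ 2) ∂μ < ∞) :
    ∫⁻ x, ENNReal.ofReal (exp (h x) - 1 - h x) ∂μ < ∞ := by
  obtain ⟨hh, hnn, δ, hδ, hexp⟩ := hH2
  set M := max 1 δ⁻¹
  set E := {x | M < h x}
  have hE : MeasurableSet E := measurableSet_lt measurable_const hh
  have hEfin : μ E < ∞ :=
    measure_setOf_lt_lt_top_of_lintegral_sq hh hL2 (one_pos.trans_le (le_max_left 1 δ⁻¹))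
  rw [← lintegral_add_compl _ hE]
  refine ENNReal.add_lt_top.2 ⟨?_, ?_⟩
  · have hδh : ∀ x ∈ E, 1 ≤ δ * h x := fun x hx => by
      calc 1 = δ * δ⁻¹ := (mul_inv_cancel₀ hδ.ne').symm
        _ ≤ δ * h x := mul_le_mul_of_nonneg_left ((le_max_right 1 δ⁻¹).trans (le_of_lt hx)) hδ.le
    calc ∫⁻ x in E, ENNReal.ofReal (exp (h x) - 1 - h x) ∂μ
        ≤ ∫⁻ x in E, ENNReal.ofReal (exp (δ * h x ^ (2 : ℝ))) ∂μ :=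
          setLIntegral_mono (by fun_prop) fun x hx => by
            rw [rpow_two]
            exact ENNReal.ofReal_le_ofReal
              (exp_sub_one_sub_le_exp_of_one_le_mul (hnn x) (hδh x hx))
      _ < ∞ := hexp E hE hEfin
  · calc ∫⁻ x in Eᶜ, ENNReal.ofReal (exp (h x) - 1 - h x) ∂μ
        ≤ ∫⁻ x in Eᶜ, ENNReal.ofReal (exp M) * ENNReal.ofReal (h x ^ 2) ∂μ :=
          setLIntegral_mono (by fun_prop) fun x hx => by
            rw [← ENNReal.ofReal_mul (exp_pos M).le]
            exact ENNReal.ofReal_le_ofReal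
              (exp_sub_one_sub_le_exp_mul_sq (le_max_left 1 δ⁻¹) (hnn x) (not_lt.1 hx))
      _ ≤ ∫⁻ x, ENNReal.ofReal (exp M) * ENNReal.ofReal (h x ^ 2) ∂μ :=
          setLIntegral_le_lintegral _ _
      _ = ENNReal.ofReal (exp M) * ∫⁻ x, ENNReal.ofReal (h x ^ 2) ∂μ :=
          lintegral_const_mul' _ _ ENNReal.ofReal_ne_top
      _ < ∞ := ENNReal.mul_lt_top ENNReal.ofReal_lt_top hL2

lemma lintegral_mul_abs_sub_one_le {g : X → ℝ} (hg : ∀ x, 0 ≤ g x) (hh : Measurable h)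
    (hnn : ∀ x, 0 ≤ h x) :
    ∫⁻ x, ENNReal.ofReal (h x * |g x - 1|) ∂μ ≤
      ∫⁻ x, ENNReal.ofReal (klFun (g x)) ∂μ + ∫⁻ x, ENNReal.ofReal (exp (h x) - 1 - h x) ∂μ := by
  rw [← lintegral_add_right _ (by fun_prop)]
  refine lintegral_mono fun x => ?_
  rw [← ENNReal.ofReal_add (klFun_nonneg (hg x)) (by linarith [add_one_le_exp (h x)])]
  exact ENNReal.ofReal_le_ofReal (mul_abs_sub_one_le_klFun_add (hnn x) (hg x))

end Integrals

theorem statement5_general {X : Type*} [MeasurableSpace X] (νT : Measure X)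
    (Υ : ℝ)
    (h : X → ℝ) (hH2 : memHp νT 2 h)
    (hL2 : ∫⁻ x, ENNReal.ofReal (h x ^ 2) ∂νT < ∞) :
    (⨆ g ∈ entS νT Υ, ∫⁻ x, ENNReal.ofReal (h x * |g x - 1|) ∂νT) < ∞ := by
  refine lt_of_le_of_lt (b := ENNReal.ofReal Υ + ∫⁻ x, ENNReal.ofReal (exp (h x) - 1 - h x) ∂νT)
    (iSup₂_le fun g ⟨_, hg, hent⟩ => ?_)
    (ENNReal.add_lt_top.2 ⟨ENNReal.ofReal_lt_top, lintegral_exp_sub_one_sub_lt_top hH2 hL2⟩)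
  calc ∫⁻ x, ENNReal.ofReal (h x * |g x - 1|) ∂νT
      ≤ ∫⁻ x, ENNReal.ofReal (klFun (g x)) ∂νT +
          ∫⁻ x, ENNReal.ofReal (exp (h x) - 1 - h x) ∂νT :=
        lintegral_mul_abs_sub_one_le hg hH2.1 hH2.2.1
    _ ≤ ENNReal.ofReal Υ + ∫⁻ x, ENNReal.ofReal (exp (h x) - 1 - h x) ∂νT := by
        simp_rw [klFun_eq_mul_log_sub_add_one]
        gcongr

/-- for `h ∈ 𝓗_2 ∩ L²(ν_T)`,
`sup_{g ∈ S^Υ} ∫ h |g − 1| dν_T < ∞`. -/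
theorem statement5 {X : Type*} [MeasurableSpace X] (νT : Measure X) [SigmaFinite νT]
    (Υ : ℝ) (hΥ : 0 < Υ)
    (h : X → ℝ) (hH2 : memHp νT 2 h)
    (hL2 : ∫⁻ x, ENNReal.ofReal (h x ^ 2) ∂νT < ∞) :
    (⨆ g ∈ entS νT Υ, ∫⁻ x, ENNReal.ofReal (h x * |g x - 1|) ∂νT) < ∞ :=
  statement5_general νT Υ h hH2 hL2
end

section
/- Let Υ > 0, f ∈ L²([0,T];H), g ∈ S^Υ, and let r : [0,T] → V be measurable with sup_{t∈[0,T]} ‖r(t)‖_H < ∞. Then the map t ↦ B(t,r(t))f(t) belongs to L¹([0,T];H) and the map t ↦ ∫_Z γ(t,r(t),z)(g(t,z) − 1) ν(dz) belongs to L¹([0,T];H). -/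
/-! Let `M` bound `‖r‖_H` on `[0,T]`. Then `‖B(t,r t)‖² ≤ |b t|(1 + M²)`, so `‖B(t,r t) f t‖` is
dominated by the integrable function `(|b t|(1 + M²) + ‖f t‖²)/2`.

For the second map, `‖(g - 1) γ(t,r t,·)‖ ≤ (1 + M)|g - 1| Lγ`, so by Fubini it suffices that
`|g - 1| Lγ ∈ L¹(ν_T)`. Fenchel–Young for `ℓ` gives `|a - 1| x ≤ ℓ(a) + (eˣ - 1 - x)` for
`a, x ≥ 0`; take `x = δ Lγ`. Where `δ Lγ ≤ 1` the error term is at most `δ² Lγ²`, integrable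
since `Lγ ∈ L²`; on `{δ Lγ > 1}`, which has finite measure by Markov's inequality, it is at most
`e^δ e^{δ Lγ²}`, integrable because `Lγ ∈ 𝓗_2`. -/

open MeasureTheory Filter Topology
open scoped ENNReal

/-- The measure `λ_T ⊗ ν` on `Z_T = [0,T] × Z`. -/
noncomputable def nuT {Z : Type*} [MeasurableSpace Z] (T : ℝ) (ν : Measure Z) :
    Measure (ℝ × Z) := (volume.restrict (Set.Icc 0 T)).prod ν

open Real InformationTheory

section Integrability

variable {α : Type*} [MeasurableSpace α] {μ : Measure α}

theorem integrable_of_lintegral_ofReal_lt_top {f : α → ℝ} (hfm : Measurable f)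
    (hf0 : ∀ x, 0 ≤ f x) (hf : ∫⁻ x, ENNReal.ofReal (f x) ∂μ < ∞) : Integrable f μ :=
  (lintegral_ofReal_ne_top_iff_integrable hfm.aestronglyMeasurable
    (Eventually.of_forall hf0)).1 hf.ne

theorem mul_le_klFun_add_exp {a : ℝ} (ha : 0 ≤ a) (x : ℝ) :
    a * x ≤ klFun a + (exp x - 1) := by
  rcases ha.eq_or_lt with rfl | ha
  · simp [klFun_zero, (exp_pos x).le]
  · have h := add_one_le_exp (x - log a)
    rw [exp_sub, exp_log ha, le_div_iff₀ ha] at h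
    rw [klFun_apply]
    linarith

theorem abs_sub_one_mul_le_klFun_add {a x : ℝ} (ha : 0 ≤ a) (hx : 0 ≤ x) :
    |a - 1| * x ≤ klFun a + (exp x - 1 - x) := by
  have hpos := mul_le_klFun_add_exp ha x
  have hneg := mul_le_klFun_add_exp ha (-x)
  have hsinh : x ≤ sinh x := self_le_sinh_iff.2 hx
  rw [sinh_eq] at hsinh
  rcases abs_cases (a - 1) with ⟨h, -⟩ | ⟨h, -⟩ <;> rw [h] <;> linarith

theorem integrable_abs_sub_one_mul {g L : α → ℝ} {δ : ℝ} (hδ : 0 < δ)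
    (hgm : Measurable g) (hg0 : ∀ x, 0 ≤ g x) (hg : Integrable (fun x => klFun (g x)) μ)
    (hLm : Measurable L) (hL0 : ∀ x, 0 ≤ L x) (hL : Integrable (fun x => L x ^ 2) μ)
    (hexp : IntegrableOn (fun x => exp (δ * L x ^ 2)) {x | 1 < δ * L x} μ) :
    Integrable (fun x => |g x - 1| * L x) μ := by
  set A := {x | 1 < δ * L x}
  have hA : MeasurableSet A := measurableSet_lt measurable_const (hLm.const_mul δ)
  have hdom : Integrable (fun x => δ⁻¹ * (klFun (g x) +
      (δ ^ 2 * L x ^ 2 + A.indicator (fun x => exp δ * exp (δ * L x ^ 2)) x))) μ :=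
    (hg.add ((hL.const_mul _).add
      (IntegrableOn.integrable_indicator (hexp.const_mul _) hA))).const_mul _
  refine hdom.mono' ((hgm.sub_const 1).abs.mul hLm).aestronglyMeasurable
    (Eventually.of_forall fun x => ?_)
  have hδL : 0 ≤ δ * L x := mul_nonneg hδ.le (hL0 x)
  have hyoung := abs_sub_one_mul_le_klFun_add (hg0 x) hδL
  rw [Real.norm_of_nonneg (mul_nonneg (abs_nonneg _) (hL0 x)), le_inv_mul_iff₀ hδ]
  suffices exp (δ * L x) - 1 - δ * L x ≤
      δ ^ 2 * L x ^ 2 + A.indicator (fun x => exp δ * exp (δ * L x ^ 2)) x by linarith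
  by_cases hx : x ∈ A
  · have hLsq : L x ≤ 1 + L x ^ 2 := by nlinarith [sq_nonneg (L x - 1)]
    have : exp (δ * L x) ≤ exp δ * exp (δ * L x ^ 2) := by
      rw [← exp_add]
      gcongr
      nlinarith
    rw [Set.indicator_of_mem hx]
    nlinarith
  · have hsmall : |δ * L x| ≤ 1 := by
      rw [abs_of_nonneg hδL]
      simpa [A] using hx
    have := (abs_le.1 (abs_exp_sub_one_sub_id_le hsmall)).2
    rw [Set.indicator_of_notMem hx]
    linarith

theorem integrable_abs_sub_one_mul_of_mem_entS {Υ : ℝ} {g L : α → ℝ} (hg : g ∈ entS μ Υ)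
    (hL : memHp μ 2 L) (hL2 : ∫⁻ x, ENNReal.ofReal (L x ^ 2) ∂μ < ∞) :
    Integrable (fun x => |g x - 1| * L x) μ := by
  obtain ⟨hgm, hg0, hgΥ⟩ := hg
  obtain ⟨hLm, hL0, δ, hδ, hexp⟩ := hL
  have hLsq : Integrable (fun x => L x ^ 2) μ :=
    integrable_of_lintegral_ofReal_lt_top (hLm.pow_const 2) (fun x => sq_nonneg (L x)) hL2
  refine integrable_abs_sub_one_mul hδ hgm hg0 ?_ hLm hL0 hLsq ?_
  · refine integrable_of_lintegral_ofReal_lt_top (measurable_klFun.comp hgm)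
      (fun x => klFun_nonneg (hg0 x)) ?_
    simpa only [Function.comp, klFun_apply, add_sub_right_comm] using
      hgΥ.trans_lt ENNReal.ofReal_lt_top
  · have hA : MeasurableSet {x | 1 < δ * L x} :=
      measurableSet_lt measurable_const (hLm.const_mul δ)
    have hAfin : μ {x | 1 < δ * L x} < ∞ := by
      refine lt_of_le_of_lt (measure_mono fun x (hx : 1 < δ * L x) => ?_)
        ((hLsq.const_mul (δ ^ 2)).measure_gt_lt_top one_pos)
      show 1 < δ ^ 2 * L x ^ 2
      nlinarith
    refine integrable_of_lintegral_ofReal_lt_top (((hLm.pow_const 2).const_mul δ).exp)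
      (fun x => (exp_pos _).le) ?_
    simpa only [rpow_two] using hexp _ hA hAfin

theorem integrable_apply_of_norm_sq_le {𝕜 E F : Type*} [NontriviallyNormedField 𝕜]
    [NormedAddCommGroup E] [NormedSpace 𝕜 E] [NormedAddCommGroup F] [NormedSpace 𝕜 F]
    {A : α → E →L[𝕜] F} {f : α → E} {c : α → ℝ} (hA : AEStronglyMeasurable A μ)
    (hf : MemLp f 2 μ) (hc : Integrable c μ) (hAc : ∀ᵐ t ∂μ, ‖A t‖ ^ 2 ≤ c t) :
    Integrable (fun t => A t (f t)) μ := by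
  have hmeas : AEStronglyMeasurable (fun t => A t (f t)) μ :=
    isBoundedBilinearMap_apply.continuous.comp_aestronglyMeasurable (hA.prodMk hf.1)
  refine ((hc.add hf.norm.integrable_sq).div_const 2).mono' hmeas ?_
  filter_upwards [hAc] with t ht
  calc ‖A t (f t)‖ ≤ ‖A t‖ * ‖f t‖ := (A t).le_opNorm (f t)
    _ ≤ (c t + ‖f t‖ ^ 2) / 2 := by nlinarith [sq_nonneg (‖A t‖ - ‖f t‖)]

end Integrability

theorem statement6_general {V H Z : Type*}
    [NormedAddCommGroup V] [NormedSpace ℝ V] [MeasurableSpace V]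
    [NormedAddCommGroup H] [InnerProductSpace ℝ H]
    [TopologicalSpace Z] [PolishSpace Z] [LocallyCompactSpace Z]
    [MeasurableSpace Z]
    -- the continuous dense embedding `V ⊂ H`
    (i : V →L[ℝ] H)
    (T : ℝ)
    (ν : Measure Z) [IsFiniteMeasureOnCompacts ν]
    (b : ℝ → ℝ) (hb : IntegrableOn b (Set.Icc 0 T))
    (B : ℝ → V → (H →L[ℝ] H))
    (hB_meas : StronglyMeasurable (Function.uncurry B))
    -- operator-norm bound on `B` (implied by (H.5))
    (hB : ∀ᵐ t ∂(volume.restrict (Set.Icc (0:ℝ) T)), ∀ x : V,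
      ‖B t x‖ ≤ Real.sqrt (b t * (1 + ‖i x‖ ^ 2)))
    (γ : ℝ → V → Z → H)
    (hγ_meas : StronglyMeasurable (fun q : ℝ × V × Z => γ q.1 q.2.1 q.2.2))
    (Lγ : ℝ × Z → ℝ)
    (hLγ_L2 : ∫⁻ q, ENNReal.ofReal (Lγ q ^ 2) ∂(nuT T ν) < ∞)
    (hLγ_H2 : memHp (nuT T ν) 2 Lγ)
    -- growth bound on `γ` (hypothesis (H.8))
    (hγ : ∀ᵐ t ∂(volume.restrict (Set.Icc (0:ℝ) T)), ∀ (x : V) (z : Z),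
      ‖γ t x z‖ ≤ Lγ (t, z) * (1 + ‖i x‖))
    (Υ : ℝ)
    (f : ℝ → H) (hf : MemLp f 2 (volume.restrict (Set.Icc (0:ℝ) T)))
    (g : ℝ × Z → ℝ) (hg : g ∈ entS (nuT T ν) Υ)
    (r : ℝ → V) (hr_meas : Measurable r)
    (hr_bdd : ∃ M : ℝ, ∀ t ∈ Set.Icc (0:ℝ) T, ‖i (r t)‖ ≤ M) :
    Integrable (fun t => (B t (r t)) (f t)) (volume.restrict (Set.Icc (0:ℝ) T)) ∧
    Integrable (fun t => ∫ z, (g (t, z) - 1) • γ t (r t) z ∂ν)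
      (volume.restrict (Set.Icc (0:ℝ) T)) := by
  obtain ⟨M, hM⟩ := hr_bdd
  have hIcc : ∀ᵐ t ∂(volume.restrict (Set.Icc (0:ℝ) T)), t ∈ Set.Icc 0 T :=
    ae_restrict_mem measurableSet_Icc
  constructor
  · refine integrable_apply_of_norm_sq_le
      (hB_meas.comp_measurable (measurable_id.prodMk hr_meas)).aestronglyMeasurable hf
      (hb.abs.mul_const (1 + M ^ 2)) ?_
    filter_upwards [hB, hIcc] with t hBt ht
    have hbr : b t * (1 + ‖i (r t)‖ ^ 2) ≤ |b t| * (1 + M ^ 2) :=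
      mul_le_mul (le_abs_self _) (by gcongr; exact hM t ht) (by positivity) (abs_nonneg _)
    exact (Real.le_sqrt (norm_nonneg _) (by positivity)).1
      ((hBt (r t)).trans (Real.sqrt_le_sqrt hbr))
  · have hγr : StronglyMeasurable fun q : ℝ × Z => γ q.1 (r q.1) q.2 :=
      hγ_meas.comp_measurable
        (measurable_fst.prodMk ((hr_meas.comp measurable_fst).prodMk measurable_snd))
    refine Integrable.integral_prod_left (f := fun q => (g q - 1) • γ q.1 (r q.1) q.2) ?_
    refine ((integrable_abs_sub_one_mul_of_mem_entS hg hLγ_H2 hLγ_L2).const_mul (1 + M)).mono'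
      ((hg.1.sub_const 1).aestronglyMeasurable.smul hγr.aestronglyMeasurable) ?_
    filter_upwards [Measure.quasiMeasurePreserving_fst.ae (hγ.and hIcc)]
      with ⟨t, z⟩ ⟨hγt, ht⟩
    have hLγ0 : 0 ≤ Lγ (t, z) := hLγ_H2.2.1 (t, z)
    calc ‖(g (t, z) - 1) • γ t (r t) z‖ ≤ |g (t, z) - 1| * (Lγ (t, z) * (1 + M)) := by
          rw [norm_smul, Real.norm_eq_abs]
          gcongr
          exact (hγt _ _).trans (by gcongr; exact hM t ht)
      _ = (1 + M) * (|g (t, z) - 1| * Lγ (t, z)) := by ring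

/-- if `sup_{t∈[0,T]} ‖r(t)‖_H < ∞`, `f ∈ L²([0,T];H)` and `g ∈ S^Υ`, then
`t ↦ B(t,r(t))f(t)` and `t ↦ ∫_Z γ(t,r(t),z)(g(t,z) − 1) ν(dz)` belong to `L¹([0,T];H)`. -/
theorem statement6 {V H Z : Type*}
    [NormedAddCommGroup V] [NormedSpace ℝ V] [MeasurableSpace V] [BorelSpace V]
    [NormedAddCommGroup H] [InnerProductSpace ℝ H] [CompleteSpace H]
    [TopologicalSpace Z] [PolishSpace Z] [LocallyCompactSpace Z]
    [MeasurableSpace Z] [BorelSpace Z]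
    -- the continuous dense embedding `V ⊂ H`
    (i : V →L[ℝ] H) (hi_inj : Function.Injective i) (hi_dense : DenseRange i)
    (T : ℝ) (hT : 0 < T)
    (ν : Measure Z) [IsFiniteMeasureOnCompacts ν]
    (b : ℝ → ℝ) (hb0 : ∀ t, 0 ≤ b t) (hb : IntegrableOn b (Set.Icc 0 T))
    (B : ℝ → V → (H →L[ℝ] H))
    (hB_meas : StronglyMeasurable (Function.uncurry B))
    -- operator-norm bound on `B` (implied by (H.5))
    (hB : ∀ᵐ t ∂(volume.restrict (Set.Icc (0:ℝ) T)), ∀ x : V,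
      ‖B t x‖ ≤ Real.sqrt (b t * (1 + ‖i x‖ ^ 2)))
    (γ : ℝ → V → Z → H)
    (hγ_meas : StronglyMeasurable (fun q : ℝ × V × Z => γ q.1 q.2.1 q.2.2))
    (Lγ : ℝ × Z → ℝ)
    (hLγ_L2 : ∫⁻ q, ENNReal.ofReal (Lγ q ^ 2) ∂(nuT T ν) < ∞)
    (hLγ_H2 : memHp (nuT T ν) 2 Lγ)
    -- growth bound on `γ` (hypothesis (H.8))
    (hγ : ∀ᵐ t ∂(volume.restrict (Set.Icc (0:ℝ) T)), ∀ (x : V) (z : Z),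
      ‖γ t x z‖ ≤ Lγ (t, z) * (1 + ‖i x‖))
    (Υ : ℝ) (hΥ : 0 < Υ)
    (f : ℝ → H) (hf : MemLp f 2 (volume.restrict (Set.Icc (0:ℝ) T)))
    (g : ℝ × Z → ℝ) (hg : g ∈ entS (nuT T ν) Υ)
    (r : ℝ → V) (hr_meas : Measurable r)
    (hr_bdd : ∃ M : ℝ, ∀ t ∈ Set.Icc (0:ℝ) T, ‖i (r t)‖ ≤ M) :
    Integrable (fun t => (B t (r t)) (f t)) (volume.restrict (Set.Icc (0:ℝ) T)) ∧
    Integrable (fun t => ∫ z, (g (t, z) - 1) • γ t (r t) z ∂ν)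
      (volume.restrict (Set.Icc (0:ℝ) T)) :=
  statement6_general i T ν b hb B hB_meas hB γ hγ_meas Lγ hLγ_L2 hLγ_H2 hγ Υ f hf g hg r hr_meas
    hr_bdd
end

section
/- Fix N > 0 and Υ > 0. The family R₁ = { h : [0,T] → H : h(t) = ∫₀^t B(τ, r(τ)) ψ(τ) dτ, where r : [0,T] → V is measurable with sup_{t∈[0,T]} ‖r(t)‖_H ≤ N and ψ ∈ L²([0,T];H) with ∫₀^T ‖ψ(τ)‖_H² dτ ≤ 2Υ }, regarded as a subset of C([0,T];V*) with the supremum norm, is relatively compact in C([0,T];V*). -/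
/-!
Each `F` in the family is `t ↦ j (∫ τ in [0, t], f τ)`, where `j : H → V*`, `x ↦ ⟪x, i ·⟫`, and
`‖f τ‖ ≤ √(β τ) ‖ψ τ‖` with `β = b (1 + N²)`. By Cauchy–Schwarz, `‖∫ τ in s, f τ‖` is at most
`√(∫ τ in s, β τ) √(2Υ)` for every `s ⊆ [0, T]`. Hence all values of all `F` lie in the image
under `j` of one ball of `H`, which is relatively compact because `j` is the transpose of the
compact operator `i` (Schauder), and all `F` share the modulus of continuity
`‖j‖ √(2Υ) √|G u - G v|`, with `G` the continuous primitive of `β`. Arzelà–Ascoli concludes.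
-/

open MeasureTheory Filter Topology Set Metric

theorem ContinuousMap.isCompact_closure_of_continuity_modulus {X β : Type*} [TopologicalSpace X]
    [CompactSpace X] [MetricSpace β] {S : Set C(X, β)} {Q : Set β} (hQ : IsCompact Q)
    (hSQ : ∀ F ∈ S, ∀ x, F x ∈ Q) (ρ : X → X → ℝ) (hρ : ∀ x, Tendsto (ρ x) (𝓝 x) (𝓝 0))
    (hSρ : ∀ F ∈ S, ∀ x y, dist (F x) (F y) ≤ ρ x y) :
    IsCompact (closure S) := by
  let e := (ContinuousMap.isometryEquivBoundedOfCompact X β).toHomeomorph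
  have hcpt : IsCompact (closure (e '' S)) := by
    refine BoundedContinuousFunction.arzela_ascoli Q hQ _
      (by rintro _ x ⟨F, hF, rfl⟩; exact hSQ F hF x) fun x => ?_
    refine Metric.equicontinuousAt_of_continuity_modulus (ρ x) (hρ x) _ (.of_forall ?_)
    rintro y ⟨_, F, hF, rfl⟩
    exact hSρ F hF x y
  simpa [← e.image_closure] using hcpt.image e.symm.continuous

theorem TotallyBounded.image_of_dist_le {α β γ : Type*} [PseudoMetricSpace β]
    [PseudoMetricSpace γ] {f : α → β} {g : α → γ} {s : Set α} (hg : TotallyBounded (g '' s))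
    (hfg : ∀ a ∈ s, ∀ b ∈ s, dist (f a) (f b) ≤ dist (g a) (g b)) :
    TotallyBounded (f '' s) := by
  refine Metric.totallyBounded_iff.2 fun ε hε => ?_
  obtain ⟨t, hts, ht, hcover⟩ :=
    Set.exists_subset_image_finite_and.1 (Metric.finite_approx_of_totallyBounded hg ε hε)
  refine ⟨f '' t, ht.image f, ?_⟩
  rintro _ ⟨a, ha, rfl⟩
  obtain ⟨_, ⟨b, hb, rfl⟩, hab⟩ := Set.mem_iUnion₂.1 (hcover ⟨a, ha, rfl⟩)
  exact Set.mem_iUnion₂.2 ⟨f b, ⟨b, hb, rfl⟩, (hfg a ha b (hts hb)).trans_lt hab⟩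

section DualEmbedding

variable {V H : Type*} [NormedAddCommGroup V] [NormedSpace ℝ V]
  [NormedAddCommGroup H] [InnerProductSpace ℝ H]

/-- The embedding `H ≅ H* → V*` of the Gelfand triple, `x ↦ ⟪x, i ·⟫`. -/
noncomputable def dualEmbedding (i : V →L[ℝ] H) : H →L[ℝ] StrongDual ℝ V :=
  (ContinuousLinearMap.compL ℝ V H ℝ).flip i ∘L innerSL ℝ

theorem dualEmbedding_apply (i : V →L[ℝ] H) (x : H) :
    dualEmbedding i x = (innerSL ℝ x).comp i := rfl

theorem isCompact_closure_dualEmbedding_image_closedBall {i : V →L[ℝ] H}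
    (hi : IsCompactOperator i) (M : ℝ) :
    IsCompact (closure (dualEmbedding i '' closedBall 0 M)) := by
  -- `‖dualEmbedding i x‖` is the sup of `|⟪x, k⟫|` over `k ∈ K`, so `dualEmbedding i` is
  -- dominated by restriction to `K`, where Arzelà–Ascoli applies.
  set K := closure (i '' closedBall 0 1)
  have hK : IsCompact K := hi.isCompact_closure_image_closedBall 1
  have : CompactSpace K := isCompact_iff_compactSpace.1 hK
  obtain ⟨R, hR⟩ := hK.isBounded.subset_closedBall 0
  let Φ : H → BoundedContinuousFunction K ℝ := fun x =>
    .mkOfCompact ⟨fun k => inner ℝ x (k : H), by fun_prop⟩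
  have hΦ : TotallyBounded (Φ '' closedBall 0 M) := by
    refine (BoundedContinuousFunction.arzela_ascoli (closedBall 0 (M * R))
      (isCompact_closedBall _ _) _ ?_ ?_).totallyBounded.subset subset_closure
    · rintro _ k ⟨x, hx, rfl⟩
      have hx : ‖x‖ ≤ M := by simpa using hx
      have hk : ‖(k : H)‖ ≤ R := by simpa using hR k.2
      simpa [Φ] using (abs_real_inner_le_norm x k).trans
        (mul_le_mul hx hk (norm_nonneg _) ((norm_nonneg x).trans hx))
    · refine Metric.equicontinuous_of_continuity_modulus (fun t => M * t)
        (by simpa using (continuous_const_mul M).tendsto 0) _ ?_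
      rintro k k' ⟨_, x, hx, rfl⟩
      have hx : ‖x‖ ≤ M := by simpa using hx
      calc dist (inner ℝ x (k : H)) (inner ℝ x (k' : H)) = |inner ℝ x ((k : H) - k')| := by
            rw [Real.dist_eq, inner_sub_right]
        _ ≤ ‖x‖ * ‖(k : H) - k'‖ := abs_real_inner_le_norm _ _
        _ ≤ M * dist k k' := by
            rw [Subtype.dist_eq, dist_eq_norm]
            exact mul_le_mul_of_nonneg_right hx (norm_nonneg _)
  refine (hΦ.image_of_dist_le fun x _ y _ => ?_).closure.isCompact_of_isClosed isClosed_closure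
  rw [dist_eq_norm, ← map_sub]
  refine ContinuousLinearMap.opNorm_le_of_unit_norm dist_nonneg fun v hv => ?_
  have hk : i v ∈ K := subset_closure ⟨v, by simp [hv], rfl⟩
  calc ‖dualEmbedding i (x - y) v‖ = dist (Φ x ⟨i v, hk⟩) (Φ y ⟨i v, hk⟩) := by
        simp [Φ, dualEmbedding_apply, Real.dist_eq]
    _ ≤ dist (Φ x) (Φ y) := BoundedContinuousFunction.dist_coe_le_dist _

end DualEmbedding

theorem norm_sub_le_of_continuousOn_of_eq_zero {E : Type*} [NormedAddCommGroup E] {F : ℝ → E}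
    {P : ℝ → Prop} {u v C : ℝ} (huv : u ≤ v) (hF : ContinuousOn F (Icc u v)) (hC : 0 ≤ C)
    (hP : ∀ t ∈ Icc u v, P t → ‖F t - F u‖ ≤ C) (hnP : ∀ t ∈ Icc u v, ¬P t → F t = 0) :
    ‖F v - F u‖ ≤ C := by
  by_cases hv : P v
  · exact hP v ⟨huv, le_rfl⟩ hv
  have hFv : F v = 0 := hnP v ⟨huv, le_rfl⟩ hv
  by_cases hu : P u
  swap
  · rwa [hFv, hnP u ⟨le_rfl, huv⟩ hu, sub_zero, norm_zero]
  set S := {t ∈ Icc u v | P t}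
  have hSbdd : BddAbove S := ⟨v, fun t ht => ht.1.2⟩
  have hcS : sSup S ∈ closure S := csSup_mem_closure ⟨u, ⟨le_rfl, huv⟩, hu⟩ hSbdd
  have hc : sSup S ∈ Icc u v := isClosed_Icc.closure_subset_iff.2 (fun t ht => ht.1) hcS
  -- `F` vanishes right of `sSup S`, hence at `sSup S` by continuity
  have hFc : F (sSup S) = 0 := by
    by_cases hPc : P (sSup S)
    swap
    · exact hnP _ hc hPc
    have hcv : sSup S < v := hc.2.lt_of_ne fun h => hv (h ▸ hPc)
    have hzero : Ioc (sSup S) v ⊆ Icc u v ∩ F ⁻¹' {0} := fun t ht =>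
      have htuv : t ∈ Icc u v := ⟨hc.1.trans ht.1.le, ht.2⟩
      ⟨htuv, hnP t htuv fun hPt => (le_csSup hSbdd ⟨htuv, hPt⟩).not_gt ht.1⟩
    have := (hF.preimage_isClosed_of_isClosed isClosed_Icc isClosed_singleton).closure_subset_iff.2
      hzero (by rw [closure_Ioc hcv.ne]; exact left_mem_Icc.2 hcv.le)
    exact this.2
  have hbound := ((hF.sub continuousOn_const).norm.preimage_isClosed_of_isClosed isClosed_Icc
    isClosed_Iic).closure_subset_iff.2 (fun t ht => ⟨ht.1, hP t ht.1 ht.2⟩) hcS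
  simpa [hFv, hFc] using hbound.2

section CauchySchwarz

variable {α E : Type*} [MeasurableSpace α] {μ : Measure α} [NormedAddCommGroup E]
  [NormedSpace ℝ E] {f : α → E} {β c : α → ℝ}

theorem norm_integral_le_sqrt_mul_sqrt (hβ : Integrable β μ) (hβ0 : ∀ x, 0 ≤ β x)
    (hc : MemLp c 2 μ) (hc0 : ∀ x, 0 ≤ c x) (hf : ∀ᵐ x ∂μ, ‖f x‖ ≤ √(β x) * c x) :
    ‖∫ x, f x ∂μ‖ ≤ √(∫ x, β x ∂μ) * √(∫ x, c x ^ 2 ∂μ) := by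
  have hsqrtβ : MemLp (fun x => √(β x)) 2 μ := by
    refine (memLp_two_iff_integrable_sq (by fun_prop)).2 (hβ.congr (.of_forall fun x => ?_))
    exact (Real.sq_sqrt (hβ0 x)).symm
  calc ‖∫ x, f x ∂μ‖ ≤ ∫ x, ‖f x‖ ∂μ := norm_integral_le_integral_norm _
    _ ≤ ∫ x, √(β x) * c x ∂μ :=
        integral_mono_of_nonneg (.of_forall fun _ => norm_nonneg _) (hsqrtβ.integrable_mul hc) hf
    _ ≤ (∫ x, √(β x) ^ (2 : ℝ) ∂μ) ^ (1 / (2 : ℝ)) * (∫ x, c x ^ (2 : ℝ) ∂μ) ^ (1 / (2 : ℝ)) :=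
        integral_mul_le_Lp_mul_Lq_of_nonneg .two_two (.of_forall fun _ => Real.sqrt_nonneg _)
          (.of_forall hc0) (by simpa using hsqrtβ) (by simpa using hc)
    _ = √(∫ x, β x ∂μ) * √(∫ x, c x ^ 2 ∂μ) := by
        simp only [Real.rpow_two, Real.sq_sqrt (hβ0 _), ← Real.sqrt_eq_rpow]

theorem norm_setIntegral_le_sqrt_mul_sqrt {s t : Set α} {K : ℝ} (hst : s ⊆ t)
    (hβ : IntegrableOn β t μ) (hβ0 : ∀ x, 0 ≤ β x) (hc : MemLp c 2 (μ.restrict t))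
    (hc0 : ∀ x, 0 ≤ c x) (hcK : ∫ x in t, c x ^ 2 ∂μ ≤ K)
    (hf : ∀ᵐ x ∂μ.restrict t, ‖f x‖ ≤ √(β x) * c x) :
    ‖∫ x in s, f x ∂μ‖ ≤ √(∫ x in s, β x ∂μ) * √K := by
  refine (norm_integral_le_sqrt_mul_sqrt (hβ.mono_set hst) hβ0
    (hc.mono_measure (Measure.restrict_mono hst le_rfl)) hc0
    (ae_restrict_of_ae_restrict_of_subset hst hf)).trans ?_
  gcongr
  exact (setIntegral_mono_set hc.integrable_sq (.of_forall fun _ => sq_nonneg _)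
    hst.eventuallyLE).trans hcK

end CauchySchwarz

theorem setIntegral_Icc_sub_setIntegral_Icc {E : Type*} [NormedAddCommGroup E] [NormedSpace ℝ E]
    {μ : Measure ℝ} {f : ℝ → E} {a u v : ℝ} (hau : a ≤ u) (huv : u ≤ v)
    (hf : IntegrableOn f (Icc a v) μ) :
    ∫ τ in Icc a v, f τ ∂μ - ∫ τ in Icc a u, f τ ∂μ = ∫ τ in Ioc u v, f τ ∂μ := by
  rw [← Icc_union_Ioc_eq_Icc hau huv] at hf ⊢
  rw [setIntegral_union ((Iic_disjoint_Ioc le_rfl).mono_left Icc_subset_Iic_self)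
    measurableSet_Ioc (hf.mono_set subset_union_left) (hf.mono_set subset_union_right),
    add_sub_cancel_left]

section Primitive

variable {E E' : Type*} [NormedAddCommGroup E] [NormedSpace ℝ E] [NormedAddCommGroup E']
  [NormedSpace ℝ E'] {f : ℝ → E} {β : ℝ → ℝ} {T K : ℝ}

theorem setIntegral_Icc_le_setIntegral_Icc {a s t : ℝ} (hβ : IntegrableOn β (Icc a t))
    (hβ0 : ∀ x, 0 ≤ β x) (hst : s ≤ t) : ∫ x in Icc a s, β x ≤ ∫ x in Icc a t, β x :=
  setIntegral_mono_set hβ (.of_forall fun _ => hβ0 _) (Icc_subset_Icc_right hst).eventuallyLE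

theorem norm_setIntegral_Icc_le (hβ : IntegrableOn β (Icc 0 T)) (hβ0 : ∀ x, 0 ≤ β x)
    (hbound : ∀ s ⊆ Icc 0 T, ‖∫ x in s, f x‖ ≤ √(∫ x in s, β x) * √K) {t : ℝ}
    (ht : t ∈ Icc 0 T) :
    ‖∫ x in Icc 0 t, f x‖ ≤ √(∫ x in Icc 0 T, β x) * √K :=
  (hbound _ (Icc_subset_Icc_right ht.2)).trans <| mul_le_mul_of_nonneg_right
    (Real.sqrt_le_sqrt (setIntegral_Icc_le_setIntegral_Icc hβ hβ0 ht.2)) (Real.sqrt_nonneg K)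

/-- Where `f` is not integrable the integrals are junk (`0`); there `hcont` is what rules out
a jump. -/
theorem norm_map_setIntegral_Icc_sub_le (L : E →L[ℝ] E') (hβ : IntegrableOn β (Icc 0 T))
    (hβ0 : ∀ x, 0 ≤ β x) (hbound : ∀ s ⊆ Icc 0 T, ‖∫ x in s, f x‖ ≤ √(∫ x in s, β x) * √K)
    (hcont : ContinuousOn (fun t => L (∫ x in Icc 0 t, f x)) (Icc 0 T)) {u v : ℝ}
    (hu : u ∈ Icc 0 T) (hv : v ∈ Icc 0 T) :
    ‖L (∫ x in Icc 0 u, f x) - L (∫ x in Icc 0 v, f x)‖ ≤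
      ‖L‖ * (√|(∫ x in Icc 0 u, β x) - ∫ x in Icc 0 v, β x| * √K) := by
  wlog huv : u ≤ v generalizing u v
  · rw [norm_sub_rev, abs_sub_comm]
    exact this hv hu (le_of_not_ge huv)
  have hβ' {t : ℝ} (ht : t ≤ T) : IntegrableOn β (Icc 0 t) := hβ.mono_set (Icc_subset_Icc_right ht)
  rw [norm_sub_rev, abs_sub_comm,
    abs_of_nonneg (sub_nonneg.2 (setIntegral_Icc_le_setIntegral_Icc (hβ' hv.2) hβ0 huv))]
  refine norm_sub_le_of_continuousOn_of_eq_zero (P := fun t => IntegrableOn f (Icc 0 t)) huv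
    (hcont.mono (Icc_subset_Icc hu.1 hv.2)) (by positivity) (fun t ht hft => ?_) fun t _ hft => ?_
  · have hincr : ‖(∫ x in Icc 0 t, f x) - ∫ x in Icc 0 u, f x‖ ≤
        √((∫ x in Icc 0 t, β x) - ∫ x in Icc 0 u, β x) * √K := by
      rw [setIntegral_Icc_sub_setIntegral_Icc hu.1 ht.1 hft,
        setIntegral_Icc_sub_setIntegral_Icc hu.1 ht.1 (hβ' (ht.2.trans hv.2))]
      exact hbound _ (Ioc_subset_Icc_self.trans (Icc_subset_Icc hu.1 (ht.2.trans hv.2)))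
    rw [← map_sub]
    calc ‖L ((∫ x in Icc 0 t, f x) - ∫ x in Icc 0 u, f x)‖
        ≤ ‖L‖ * ‖(∫ x in Icc 0 t, f x) - ∫ x in Icc 0 u, f x‖ := L.le_opNorm _
      _ ≤ ‖L‖ * (√((∫ x in Icc 0 t, β x) - ∫ x in Icc 0 u, β x) * √K) := by gcongr
      _ ≤ ‖L‖ * (√((∫ x in Icc 0 v, β x) - ∫ x in Icc 0 u, β x) * √K) := by
          gcongr ‖L‖ * (√(?_ - _) * _)
          exact setIntegral_Icc_le_setIntegral_Icc (hβ' hv.2) hβ0 ht.2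
  · simp [integral_undef hft]

end Primitive

theorem norm_setIntegral_apply_le_sqrt_mul_sqrt {V H : Type*} [NormedAddCommGroup V]
    [NormedSpace ℝ V] [NormedAddCommGroup H] [NormedSpace ℝ H] {i : V →L[ℝ] H} {T N K : ℝ}
    {b : ℝ → ℝ} {B : ℝ → V → H →L[ℝ] H} {r : ℝ → V} {ψ : ℝ → H} (hb0 : ∀ t, 0 ≤ b t)
    (hb : IntegrableOn b (Icc 0 T))
    (hB : ∀ᵐ t ∂volume.restrict (Icc 0 T), ∀ x, ‖B t x‖ ≤ √(b t * (1 + ‖i x‖ ^ 2)))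
    (hr : ∀ t ∈ Icc 0 T, ‖i (r t)‖ ≤ N) (hψ : MemLp ψ 2 (volume.restrict (Icc 0 T)))
    (hψK : ∫ t in Icc 0 T, ‖ψ t‖ ^ 2 ≤ K) (s : Set ℝ) (hs : s ⊆ Icc 0 T) :
    ‖∫ t in s, B t (r t) (ψ t)‖ ≤ √(∫ t in s, b t * (1 + N ^ 2)) * √K := by
  refine norm_setIntegral_le_sqrt_mul_sqrt hs (hb.mul_const _)
    (fun t => mul_nonneg (hb0 t) (by positivity)) hψ.norm (fun _ => norm_nonneg _) hψK ?_
  filter_upwards [hB, ae_restrict_mem measurableSet_Icc] with t hBt ht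
  have := hb0 t
  calc ‖B t (r t) (ψ t)‖ ≤ ‖B t (r t)‖ * ‖ψ t‖ := (B t (r t)).le_opNorm _
    _ ≤ √(b t * (1 + N ^ 2)) * ‖ψ t‖ := by
        gcongr
        refine (hBt _).trans ?_
        gcongr
        exact hr t ht

theorem statement17_general {V H : Type*}
    [NormedAddCommGroup V] [NormedSpace ℝ V]
    [MeasurableSpace V]
    [NormedAddCommGroup H] [InnerProductSpace ℝ H]
    -- the Gelfand triple: `i : V → H` continuous, dense, injective and compact
    (i : V →L[ℝ] H)
    (hi_cpt : IsCompactOperator i)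
    (T : ℝ)
    (b : ℝ → ℝ) (hb0 : ∀ t, 0 ≤ b t) (hb : IntegrableOn b (Set.Icc 0 T))
    (B : ℝ → V → (H →L[ℝ] H))
    -- operator-norm bound on `B` (implied by (H.5))
    (hB : ∀ᵐ t ∂(volume.restrict (Set.Icc (0:ℝ) T)), ∀ x : V,
      ‖B t x‖ ≤ Real.sqrt (b t * (1 + ‖i x‖ ^ 2)))
    (N Υ : ℝ) :
    IsCompact (closure
      {F : C(Set.Icc (0:ℝ) T, StrongDual ℝ V) |
        ∃ (r : ℝ → V) (ψ : ℝ → H),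
          Measurable r ∧ (∀ t ∈ Set.Icc (0:ℝ) T, ‖i (r t)‖ ≤ N) ∧
          MemLp ψ 2 (volume.restrict (Set.Icc (0:ℝ) T)) ∧
          (∫ τ in Set.Icc (0:ℝ) T, ‖ψ τ‖ ^ 2) ≤ 2 * Υ ∧
          ∀ t : Set.Icc (0:ℝ) T,
            F t = ((innerSL ℝ (∫ τ in Set.Icc (0:ℝ) (t : ℝ), (B τ (r τ)) (ψ τ))).comp i)}) := by
  set β : ℝ → ℝ := fun τ => b τ * (1 + N ^ 2)
  have hβ : IntegrableOn β (Icc 0 T) := hb.mul_const _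
  have hβ0 (τ : ℝ) : 0 ≤ β τ := mul_nonneg (hb0 τ) (by positivity)
  have hg : Continuous fun t : Icc 0 T => ∫ τ in Icc 0 (t : ℝ), β τ :=
    (intervalIntegral.continuousOn_primitive_Icc hβ).domRestrict
  refine ContinuousMap.isCompact_closure_of_continuity_modulus
    (isCompact_closure_dualEmbedding_image_closedBall hi_cpt (√(∫ τ in Icc 0 T, β τ) * √(2 * Υ)))
    ?_ (fun u v => ‖dualEmbedding i‖ *
      (√|(∫ τ in Icc 0 (u : ℝ), β τ) - ∫ τ in Icc 0 (v : ℝ), β τ| * √(2 * Υ))) (fun u => ?_) ?_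
  · rintro F ⟨r, ψ, -, hr, hψ, hψΥ, hF⟩ t
    have hbound := norm_setIntegral_apply_le_sqrt_mul_sqrt hb0 hb hB hr hψ hψΥ
    rw [hF t]
    exact subset_closure
      ⟨_, mem_closedBall_zero_iff.2 (norm_setIntegral_Icc_le hβ hβ0 hbound t.2), rfl⟩
  · have : Continuous fun v : Icc 0 T => ‖dualEmbedding i‖ *
        (√|(∫ τ in Icc 0 (u : ℝ), β τ) - ∫ τ in Icc 0 (v : ℝ), β τ| * √(2 * Υ)) := by
      fun_prop
    simpa using this.tendsto u
  · rintro F ⟨r, ψ, -, hr, hψ, hψΥ, hF⟩ u v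
    have hbound := norm_setIntegral_apply_le_sqrt_mul_sqrt hb0 hb hB hr hψ hψΥ
    have hcont : ContinuousOn
        (fun t => dualEmbedding i (∫ τ in Icc 0 t, B τ (r τ) (ψ τ))) (Icc 0 T) :=
      continuousOn_iff_continuous_domRestrict.2 (F.continuous.congr hF)
    rw [dist_eq_norm, hF, hF]
    exact norm_map_setIntegral_Icc_sub_le _ hβ hβ0 hbound hcont u.2 v.2

/-- the family
`R₁ = { t ↦ ∫₀^t B(τ, r(τ)) ψ(τ) dτ : sup_t ‖r(t)‖_H ≤ N, ∫₀^T ‖ψ‖_H² ≤ 2Υ }`,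
viewed inside `C([0,T];V*)` via the embedding `H ⊂ V*` of the Gelfand triple, is
relatively compact in `C([0,T];V*)`. -/
theorem statement17 {V H : Type*}
    [NormedAddCommGroup V] [NormedSpace ℝ V] [CompleteSpace V]
    [MeasurableSpace V] [BorelSpace V]
    [NormedAddCommGroup H] [InnerProductSpace ℝ H] [CompleteSpace H]
    -- the Gelfand triple: `i : V → H` continuous, dense, injective and compact
    (i : V →L[ℝ] H) (hi_inj : Function.Injective i) (hi_dense : DenseRange i)
    (hi_cpt : IsCompactOperator i)
    (T : ℝ) (hT : 0 < T)
    (b : ℝ → ℝ) (hb0 : ∀ t, 0 ≤ b t) (hb : IntegrableOn b (Set.Icc 0 T))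
    (B : ℝ → V → (H →L[ℝ] H))
    -- operator-norm bound on `B` (implied by (H.5))
    (hB : ∀ᵐ t ∂(volume.restrict (Set.Icc (0:ℝ) T)), ∀ x : V,
      ‖B t x‖ ≤ Real.sqrt (b t * (1 + ‖i x‖ ^ 2)))
    (N Υ : ℝ) (hN : 0 < N) (hΥ : 0 < Υ) :
    IsCompact (closure
      {F : C(Set.Icc (0:ℝ) T, StrongDual ℝ V) |
        ∃ (r : ℝ → V) (ψ : ℝ → H),
          Measurable r ∧ (∀ t ∈ Set.Icc (0:ℝ) T, ‖i (r t)‖ ≤ N) ∧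
          MemLp ψ 2 (volume.restrict (Set.Icc (0:ℝ) T)) ∧
          (∫ τ in Set.Icc (0:ℝ) T, ‖ψ τ‖ ^ 2) ≤ 2 * Υ ∧
          ∀ t : Set.Icc (0:ℝ) T,
            F t = ((innerSL ℝ (∫ τ in Set.Icc (0:ℝ) (t : ℝ), (B τ (r τ)) (ψ τ))).comp i)}) :=
  statement17_general i hi_cpt T b hb0 hb B hB N Υ
end
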